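/- arXiv:1510.00235 — 3 statements merged into one kernel-verified Lean document; each statement's English description precedes it below -/
import Mathlib

section
/- Let G be a compact Lie group, V a finite-dimensional real orthogonal representation of G, Ω an open G-invariant subset of V, and (H) a maximal orbit type in Iso(Ω). Then for every f ∈ F^∇_G(Ω) the restriction f_H = f|_{D_f ∩ Ω_H} is a WH-equivariant gradient local map on Ω_H (in particular its zero set is compact and it is the gradient of a WH-invariant C¹ potential on its domain), and if f, g ∈ F^∇_G(Ω) are gradient otopic then f_H and g_H are gradient otopic in F^∇_{WH}(Ω_H). Hence restriction induces a well-defined map F^∇_G[Ω] → F^∇_{WH}[Ω_H]. -/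
open scoped Manifold Classical

set_option linter.unusedSectionVars false

noncomputable section

section Defs

variable {Γ : Type*} [Group Γ] {W : Type*} [NormedAddCommGroup W]
  [InnerProductSpace ℝ W] [CompleteSpace W]

/-- The stabilizer subgroup of a point under the action `ρ`. -/
def stab (ρ : Γ →* (W ≃ₗᵢ[ℝ] W)) (x : W) : Subgroup Γ where
  carrier := {g | ρ g x = x}
  one_mem' := by simp
  mul_mem' := by
    intro a b ha hb
    simp only [Set.mem_setOf_eq] at *
    rw [map_mul]
    show ρ a (ρ b x) = x
    rw [hb, ha]
  inv_mem' := by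
    intro a ha
    simp only [Set.mem_setOf_eq] at *
    have h1 : ρ a (ρ a⁻¹ x) = ρ a x := by
      rw [ha]
      show (ρ a * ρ a⁻¹) x = x
      rw [← map_mul]
      simp
    exact (ρ a).injective h1

/-- The conjugate subgroup `gHg⁻¹`. -/
def conjSub (g : Γ) (H : Subgroup Γ) : Subgroup Γ :=
  H.map ((MulAut.conj g).toMonoidHom)

/-- An equivariant local map on `Ω`: a continuous equivariant map defined on an open
invariant subset of `Ω` whose zero set is compact. -/
structure EqLocalMap (ρ : Γ →* (W ≃ₗᵢ[ℝ] W)) (Ω : Set W) where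
  dom : Set W
  toFun : W → W
  dom_sub : dom ⊆ Ω
  dom_open : IsOpen dom
  dom_inv : ∀ (g : Γ) (x : W), x ∈ dom → ρ g x ∈ dom
  cont : ContinuousOn toFun dom
  equivariant : ∀ (g : Γ) (x : W), x ∈ dom → toFun (ρ g x) = ρ g (toFun x)
  zeros_compact : IsCompact {x ∈ dom | toFun x = 0}

/-- A local map is gradient if it is the gradient of an invariant `C¹` potential
(the potential has a gradient at every point of the domain, and the gradient, being
the map itself, is continuous). -/
def IsGradMap {ρ : Γ →* (W ≃ₗᵢ[ℝ] W)} {Ω : Set W} (f : EqLocalMap ρ Ω) : Prop :=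
  ∃ φ : W → ℝ, (∀ (g : Γ) (x : W), x ∈ f.dom → φ (ρ g x) = φ x) ∧
    ∀ x ∈ f.dom, HasGradientAt φ (f.toFun x) x

/-- An equivariant gradient local map on `Ω`; `F^∇_G(Ω)`. -/
structure GradLocalMap (ρ : Γ →* (W ≃ₗᵢ[ℝ] W)) (Ω : Set W) extends EqLocalMap ρ Ω where
  isGrad : IsGradMap toEqLocalMap

/-- An otopy on `Ω`: an equivariant local map on `[0,1] × Ω` (`[0,1]` carrying the
trivial action), with domain open in `[0,1] × V` and compact zero set. -/
structure Otopy (ρ : Γ →* (W ≃ₗᵢ[ℝ] W)) (Ω : Set W) where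
  dom : Set (ℝ × W)
  toFun : ℝ × W → W
  dom_relOpen : ∃ U : Set (ℝ × W), IsOpen U ∧ dom = U ∩ (Set.Icc (0:ℝ) 1) ×ˢ Ω
  dom_inv : ∀ (g : Γ) (t : ℝ) (x : W), (t, x) ∈ dom → (t, ρ g x) ∈ dom
  cont : ContinuousOn toFun dom
  equivariant : ∀ (g : Γ) (t : ℝ) (x : W), (t, x) ∈ dom →
    toFun (t, ρ g x) = ρ g (toFun (t, x))
  zeros_compact : IsCompact {p ∈ dom | toFun p = 0}

/-- An otopy is gradient if every slice `h_t` is a gradient map. -/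
def Otopy.IsGrad {ρ : Γ →* (W ≃ₗᵢ[ℝ] W)} {Ω : Set W} (h : Otopy ρ Ω) : Prop :=
  ∀ t : ℝ, ∃ φ : W → ℝ,
    (∀ (g : Γ) (x : W), (t, x) ∈ h.dom → φ (ρ g x) = φ x) ∧
    ∀ x : W, (t, x) ∈ h.dom → HasGradientAt φ (h.toFun (t, x)) x

/-- Two equivariant local maps are otopic if some otopy joins them. -/
def Otopic {ρ : Γ →* (W ≃ₗᵢ[ℝ] W)} {Ω : Set W} (f g : EqLocalMap ρ Ω) : Prop :=
  ∃ h : Otopy ρ Ω,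
    {x : W | (0, x) ∈ h.dom} = f.dom ∧ {x : W | (1, x) ∈ h.dom} = g.dom ∧
    (∀ x ∈ f.dom, h.toFun (0, x) = f.toFun x) ∧
    (∀ x ∈ g.dom, h.toFun (1, x) = g.toFun x)

/-- Two equivariant gradient local maps are gradient otopic if some gradient otopy
joins them. -/
def GradOtopic {ρ : Γ →* (W ≃ₗᵢ[ℝ] W)} {Ω : Set W} (f g : GradLocalMap ρ Ω) : Prop :=
  ∃ h : Otopy ρ Ω, h.IsGrad ∧
    {x : W | (0, x) ∈ h.dom} = f.dom ∧ {x : W | (1, x) ∈ h.dom} = g.dom ∧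
    (∀ x ∈ f.dom, h.toFun (0, x) = f.toFun x) ∧
    (∀ x ∈ g.dom, h.toFun (1, x) = g.toFun x)

/-- The set of gradient otopy classes `F^∇_G[Ω]`. -/
def GradClasses (ρ : Γ →* (W ≃ₗᵢ[ℝ] W)) (Ω : Set W) : Type _ :=
  Quot (GradOtopic (ρ := ρ) (Ω := Ω))

/-- `Ω_H`: points of `Ω` with stabilizer exactly `H`. -/
def omegaH (ρ : Γ →* (W ≃ₗᵢ[ℝ] W)) (Ω : Set W) (H : Subgroup Γ) : Set W :=
  {x ∈ Ω | stab ρ x = H}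

/-- `Ω_(H)`: points of `Ω` with stabilizer conjugate to `H`. -/
def omegaConj (ρ : Γ →* (W ≃ₗᵢ[ℝ] W)) (Ω : Set W) (H : Subgroup Γ) : Set W :=
  {x ∈ Ω | ∃ g : Γ, conjSub g H = stab ρ x}

/-- The orbit space `S/N` of a subset `S` under the action of a subgroup `N`,
with the quotient topology. -/
def orbitSpace (ρ : Γ →* (W ≃ₗᵢ[ℝ] W)) (S : Set W) (N : Subgroup Γ) : Type _ :=
  Quot fun x y : S => ∃ n ∈ N, ρ n (x : W) = (y : W)

instance (ρ : Γ →* (W ≃ₗᵢ[ℝ] W)) (S : Set W) (N : Subgroup Γ) :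
    TopologicalSpace (orbitSpace ρ S N) :=
  instTopologicalSpaceQuot

/-- `(H)` is a maximal orbit type in `Iso(Ω)`: every orbit type occurring in `Ω`
which is `≥ (H)` equals `(H)`. -/
def IsMaximalOrbit (ρ : Γ →* (W ≃ₗᵢ[ℝ] W)) (Ω : Set W) (H : Subgroup Γ) : Prop :=
  ∀ x ∈ Ω, (∃ g : Γ, conjSub g H ≤ stab ρ x) → ∃ g : Γ, conjSub g H = stab ρ x

/-- The fixed-point subspace `V^H`, as a submodule. -/
def fixedSubmodule (ρ : Γ →* (W ≃ₗᵢ[ℝ] W)) (H : Subgroup Γ) : Submodule ℝ W where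
  carrier := {x | ∀ h ∈ H, ρ h x = x}
  add_mem' := by
    intro a b ha hb h hh
    rw [map_add, ha h hh, hb h hh]
  zero_mem' := by intro h hh; simp
  smul_mem' := by
    intro c a ha h hh
    rw [map_smul, ha h hh]

theorem fix_apply_mem (ρ : Γ →* (W ≃ₗᵢ[ℝ] W)) (H : Subgroup Γ) {n : Γ}
    (hn : n ∈ (Subgroup.normalizer (H : Set Γ))) {x : W} (hx : x ∈ fixedSubmodule ρ H) :
    ρ n x ∈ fixedSubmodule ρ H := by
  intro h hh
  have h1 : n⁻¹ * h * n ∈ H := by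
    have := (Subgroup.mem_normalizer_iff.mp hn (n⁻¹ * h * n)).mpr
    apply this
    have e : n * (n⁻¹ * h * n) * n⁻¹ = h := by group
    rw [e]
    exact hh
  have e1 : h * n = n * (n⁻¹ * h * n) := by group
  calc ρ h (ρ n x) = (ρ h * ρ n) x := rfl
    _ = ρ (h * n) x := by rw [map_mul]
    _ = ρ (n * (n⁻¹ * h * n)) x := by rw [← e1]
    _ = (ρ n * ρ (n⁻¹ * h * n)) x := by rw [map_mul]
    _ = ρ n (ρ (n⁻¹ * h * n) x) := rfl
    _ = ρ n x := by rw [hx _ h1]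

/-- The restriction of `ρ n`, for `n` in the normalizer of `H`, to a linear isometric
equivalence of `V^H`. -/
def restrictEquiv (ρ : Γ →* (W ≃ₗᵢ[ℝ] W)) (H : Subgroup Γ) (n : (Subgroup.normalizer (H : Set Γ))) :
    (fixedSubmodule ρ H) ≃ₗᵢ[ℝ] (fixedSubmodule ρ H) where
  toFun x := ⟨ρ (n : Γ) x, fix_apply_mem ρ H n.2 x.2⟩
  invFun x := ⟨ρ ((n : Γ)⁻¹) x, fix_apply_mem ρ H ((Subgroup.normalizer (H : Set Γ)).inv_mem n.2) x.2⟩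
  map_add' := by intro a b; ext; simp
  map_smul' := by intro c a; ext; simp
  left_inv := by
    intro a; ext
    calc (ρ ((n : Γ)⁻¹)) ((ρ (n : Γ)) (a : W)) = (ρ ((n : Γ)⁻¹) * ρ (n : Γ)) (a : W) := rfl
      _ = ρ ((n : Γ)⁻¹ * (n : Γ)) (a : W) := by rw [map_mul]
      _ = (a : W) := by simp
  right_inv := by intro a; ext; simp
  norm_map' := by intro a; simp

/-- The action of the normalizer `NH` on `V^H`.  Since `H` acts trivially on `V^H`,
this is precisely the action of the Weyl group `WH = NH/H` on `V^H`; equivariance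
(resp. invariance) with respect to it is equivalent to `WH`-equivariance
(resp. `WH`-invariance). -/
def restrictAction (ρ : Γ →* (W ≃ₗᵢ[ℝ] W)) (H : Subgroup Γ) :
    (Subgroup.normalizer (H : Set Γ)) →* ((fixedSubmodule ρ H) ≃ₗᵢ[ℝ] (fixedSubmodule ρ H)) where
  toFun := restrictEquiv ρ H
  map_one' := by
    refine LinearIsometryEquiv.ext fun x => Subtype.ext ?_
    show ρ ((1 : (Subgroup.normalizer (H : Set Γ))) : Γ) (x : W) = _
    simp [LinearIsometryEquiv.coe_one]
  map_mul' := by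
    intro a b
    refine LinearIsometryEquiv.ext fun x => Subtype.ext ?_
    show ρ ((a * b : (Subgroup.normalizer (H : Set Γ))) : Γ) (x : W) = _
    push_cast
    rw [map_mul]
    rfl

variable [FiniteDimensional ℝ W]

/-- `Ω_H` viewed as a subset of `V^H`. -/
def omegaHSub (ρ : Γ →* (W ≃ₗᵢ[ℝ] W)) (Ω : Set W) (H : Subgroup Γ) :
    Set (fixedSubmodule ρ H) :=
  Subtype.val ⁻¹' (omegaH ρ Ω H)

/-- `k` is the restriction `f|_{D_f ∩ Ω_H}` of `f`, viewed as a `WH`-equivariant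
gradient local map on `Ω_H ⊆ V^H`. -/
def RestrictsTo {ρ : Γ →* (W ≃ₗᵢ[ℝ] W)} {Ω : Set W} (H : Subgroup Γ)
    (f : GradLocalMap ρ Ω)
    (k : GradLocalMap (restrictAction ρ H) (omegaHSub ρ Ω H)) : Prop :=
  k.dom = Subtype.val ⁻¹' (f.dom ∩ omegaH ρ Ω H) ∧
  ∀ x : fixedSubmodule ρ H, x ∈ k.dom → (k.toFun x : W) = f.toFun (x : W)

end Defs

/-!
Maximality of `(H)` gives `Ω ∩ V^H = Ω_H`: a point of `Ω ∩ V^H` has stabilizer `gHg⁻¹ ⊇ H`,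
and in a compact group a closed `H` with `H ≤ gHg⁻¹` equals `gHg⁻¹`, since `g` lies in the
closure of the powers of `g⁻¹`. An equivariant map sends `V^H` into itself, so on `Ω_H` the map
`f_H` is just `f` on the closed subspace `V^H`: its zeros are `f⁻¹(0) ∩ V^H`, compact, and the
gradient of `φ|_{V^H}` is the orthogonal projection of `∇φ = f`, which is `f` itself. Otopies
restrict slice by slice in the same way.
-/

open Set Topology

theorem mem_conjSub {G : Type*} [Group G] {g y : G} {H : Subgroup G} :
    y ∈ conjSub g H ↔ ∃ h ∈ H, g * h * g⁻¹ = y := by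
  simp [conjSub, Subgroup.mem_map]

@[simp]
theorem conjSub_one {G : Type*} [Group G] (H : Subgroup G) : conjSub 1 H = H := by
  ext; simp [mem_conjSub]

section CompactGroup

variable {G : Type*} [Group G] [TopologicalSpace G] [CompactSpace G] [IsTopologicalGroup G]
  {H : Subgroup G}

/-- The closed monoid `{x | x H x⁻¹ ⊆ H}` contains `g⁻¹`, hence the closure of its powers,
which in a compact group contains `g`. -/
theorem conjSub_le_of_le_conjSub (hH : IsClosed (H : Set G)) {g : G} (hle : H ≤ conjSub g H) :
    conjSub g H ≤ H := by
  set S := {x : G | ∀ h ∈ H, x * h * x⁻¹ ∈ H}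
  have hS : IsClosed S := by
    simp only [S, ofPred_forall]
    exact isClosed_iInter fun h => isClosed_iInter fun _ => hH.preimage (by fun_prop)
  have hgS : g⁻¹ ∈ S := fun h hh => by
    obtain ⟨h', hh', rfl⟩ := mem_conjSub.mp (hle hh)
    simpa [mul_assoc] using hh'
  have hpow : ∀ k : ℕ, g⁻¹ ^ k ∈ S := by
    intro k
    induction k with
    | zero => simp [S]
    | succ k ih =>
      intro h hh
      simpa [pow_succ', mul_assoc] using hgS _ (ih h hh)
  have hg : g ∈ S := by
    have : g⁻¹ ^ (-1 : ℤ) ∈ closure (range (g⁻¹ ^ · : ℕ → G)) :=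
      closure_range_zpow_eq_pow g⁻¹ ▸ subset_closure ⟨-1, rfl⟩
    simpa using closure_minimal (range_subset_iff.mpr hpow) hS this
  rintro _ hy
  obtain ⟨h, hh, rfl⟩ := mem_conjSub.mp hy
  exact hg h hh

theorem conjSub_eq_of_le_conjSub (hH : IsClosed (H : Set G)) {g : G} (hle : H ≤ conjSub g H) :
    conjSub g H = H :=
  le_antisymm (conjSub_le_of_le_conjSub hH hle) hle

end CompactGroup

theorem fixedSubmodule_inter_subset_omegaH {G : Type*} [Group G] [TopologicalSpace G]
    [CompactSpace G] [IsTopologicalGroup G] {V : Type*} [NormedAddCommGroup V]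
    [InnerProductSpace ℝ V] [CompleteSpace V] {ρ : G →* (V ≃ₗᵢ[ℝ] V)} {Ω : Set V}
    {H : Subgroup G} (hH : IsClosed (H : Set G)) (hmax : IsMaximalOrbit ρ Ω H) :
    (fixedSubmodule ρ H : Set V) ∩ Ω ⊆ omegaH ρ Ω H := by
  rintro x ⟨hxH, hxΩ⟩
  have hle : H ≤ stab ρ x := hxH
  obtain ⟨g, hg⟩ := hmax x hxΩ ⟨1, by rwa [conjSub_one]⟩
  refine ⟨hxΩ, ?_⟩
  rw [← hg]
  exact conjSub_eq_of_le_conjSub hH (hg ▸ hle)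

section Projection

variable {V : Type*} [NormedAddCommGroup V] [InnerProductSpace ℝ V]

theorem Submodule.coe_orthogonalProjectionOnto_of_mem (K : Submodule ℝ V)
    [K.HasOrthogonalProjection] {v : V} (hv : v ∈ K) : (K.orthogonalProjectionOnto v : V) = v :=
  K.starProjection_eq_self_iff.mpr hv

theorem HasGradientAt.comp_subtypeVal [CompleteSpace V] (K : Submodule ℝ V) [CompleteSpace K]
    {φ : V → ℝ} {v : V} {x : K} (h : HasGradientAt φ v x) :
    HasGradientAt (fun y : K => φ y) (K.orthogonalProjectionOnto v) x := by
  rw [hasGradientAt_iff_hasFDerivAt] at h ⊢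
  refine (h.comp x K.subtypeL.hasFDerivAt).congr_fderiv ?_
  ext y
  simp [InnerProductSpace.toDual_apply_apply]

theorem isCompact_setOf_orthogonalProjectionOnto_eq_zero {X Y : Type*} [TopologicalSpace X]
    [TopologicalSpace Y] {e : X → Y} (he : IsClosedEmbedding e) (K : Submodule ℝ V)
    [K.HasOrthogonalProjection] {s : Set Y} {F : Y → V} (hF : ∀ x, e x ∈ s → F (e x) ∈ K)
    (hs : IsCompact {y ∈ s | F y = 0}) :
    IsCompact {x | e x ∈ s ∧ K.orthogonalProjectionOnto (F (e x)) = 0} := by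
  convert he.isCompact_preimage hs using 1
  ext x
  refine and_congr_right fun hx => ?_
  rw [← Submodule.coe_eq_zero, K.coe_orthogonalProjectionOnto_of_mem (hF x hx)]

end Projection

section Restriction

variable {G : Type*} [Group G] {V : Type*} [NormedAddCommGroup V] [InnerProductSpace ℝ V]
  [FiniteDimensional ℝ V] {ρ : G →* (V ≃ₗᵢ[ℝ] V)} {Ω : Set V} {H : Subgroup G}

theorem mem_fixedSubmodule_of_equivariant {F : V → V} {x : V} (hx : x ∈ fixedSubmodule ρ H)
    (hF : ∀ h ∈ H, F (ρ h x) = ρ h (F x)) : F x ∈ fixedSubmodule ρ H :=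
  fun h hh => by rw [← hF h hh, hx h hh]

theorem orthogonalProjectionOnto_comp_restrictAction {F : V → V}
    (n : Subgroup.normalizer (H : Set G)) {x : fixedSubmodule ρ H}
    (hx : F x ∈ fixedSubmodule ρ H) (hF : F (ρ n x) = ρ n (F x)) :
    (fixedSubmodule ρ H).orthogonalProjectionOnto (F (restrictAction ρ H n x)) =
      restrictAction ρ H n ((fixedSubmodule ρ H).orthogonalProjectionOnto (F x)) := by
  have hnx : F (ρ n x) ∈ fixedSubmodule ρ H := hF ▸ fix_apply_mem ρ H n.2 hx
  ext
  change _ = ρ n _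
  rw [Submodule.coe_orthogonalProjectionOnto_of_mem _ hx]
  exact (Submodule.coe_orthogonalProjectionOnto_of_mem _ hnx).trans hF

theorem EqLocalMap.apply_mem_fixedSubmodule (f : EqLocalMap ρ Ω) {x : V} (hx : x ∈ f.dom)
    (hxH : x ∈ fixedSubmodule ρ H) : f.toFun x ∈ fixedSubmodule ρ H :=
  mem_fixedSubmodule_of_equivariant hxH fun h _ => f.equivariant h x hx

theorem Otopy.apply_mem_fixedSubmodule (h : Otopy ρ Ω) {t : ℝ} {x : V} (hx : (t, x) ∈ h.dom)
    (hxH : x ∈ fixedSubmodule ρ H) : h.toFun (t, x) ∈ fixedSubmodule ρ H :=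
  mem_fixedSubmodule_of_equivariant (F := fun y => h.toFun (t, y)) hxH
    fun g _ => h.equivariant g t x hx

variable (hΩ : (fixedSubmodule ρ H : Set V) ∩ Ω ⊆ omegaH ρ Ω H)
include hΩ

theorem omegaHSub_eq_preimage : omegaHSub ρ Ω H = (↑) ⁻¹' Ω :=
  ext fun x => ⟨And.left, fun hx => hΩ ⟨x.2, hx⟩⟩

theorem preimage_inter_omegaH {D : Set V} (hD : D ⊆ Ω) :
    ((↑) ⁻¹' (D ∩ omegaH ρ Ω H) : Set (fixedSubmodule ρ H)) = (↑) ⁻¹' D :=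
  ext fun x => ⟨And.left, fun hx => ⟨hx, hΩ ⟨x.2, hD hx⟩⟩⟩

/-- The projection only makes the values land in `V^H`; they lie there already. -/
def GradLocalMap.restrictFixed (f : GradLocalMap ρ Ω) :
    GradLocalMap (restrictAction ρ H) (omegaHSub ρ Ω H) where
  dom := (↑) ⁻¹' f.dom
  toFun x := (fixedSubmodule ρ H).orthogonalProjectionOnto (f.toFun x)
  dom_sub := omegaHSub_eq_preimage hΩ ▸ preimage_mono f.dom_sub
  dom_open := f.dom_open.preimage continuous_subtype_val
  dom_inv n x hx := f.dom_inv n x hx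
  cont := (fixedSubmodule ρ H).orthogonalProjectionOnto.continuous.comp_continuousOn
    (f.cont.comp continuous_subtype_val.continuousOn fun _ hx => hx)
  equivariant n x hx := orthogonalProjectionOnto_comp_restrictAction n
    (f.apply_mem_fixedSubmodule hx x.2) (f.equivariant n x hx)
  zeros_compact := isCompact_setOf_orthogonalProjectionOnto_eq_zero
    (Submodule.closed_of_finiteDimensional _).isClosedEmbedding_subtypeVal _
    (fun x hx => f.apply_mem_fixedSubmodule hx x.2) f.zeros_compact
  isGrad := by
    obtain ⟨φ, hinv, hgrad⟩ := f.isGrad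
    exact ⟨fun y => φ y, fun n x hx => hinv n x hx, fun x hx => (hgrad x hx).comp_subtypeVal _⟩

theorem GradLocalMap.restrictsTo_restrictFixed (f : GradLocalMap ρ Ω) :
    RestrictsTo H f (f.restrictFixed hΩ) :=
  ⟨(preimage_inter_omegaH hΩ f.dom_sub).symm, fun x hx =>
    Submodule.coe_orthogonalProjectionOnto_of_mem _ (f.apply_mem_fixedSubmodule hx x.2)⟩

def Otopy.restrictFixed (h : Otopy ρ Ω) : Otopy (restrictAction ρ H) (omegaHSub ρ Ω H) where
  dom := Prod.map id ((↑) : fixedSubmodule ρ H → V) ⁻¹' h.dom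
  toFun p := (fixedSubmodule ρ H).orthogonalProjectionOnto (h.toFun (p.1, p.2))
  dom_relOpen := by
    obtain ⟨U, hU, hdom⟩ := h.dom_relOpen
    refine ⟨Prod.map id ((↑) : fixedSubmodule ρ H → V) ⁻¹' U,
      hU.preimage (continuous_id.prodMap continuous_subtype_val), ?_⟩
    rw [hdom, omegaHSub_eq_preimage hΩ, preimage_inter, preimage_prod_map_prod, preimage_id]
  dom_inv n t x hx := h.dom_inv n t x hx
  cont := (fixedSubmodule ρ H).orthogonalProjectionOnto.continuous.comp_continuousOn
    (h.cont.comp (continuous_id.prodMap continuous_subtype_val).continuousOn fun _ hx => hx)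
  equivariant n t x hx := orthogonalProjectionOnto_comp_restrictAction
    (F := fun y => h.toFun (t, y)) n (h.apply_mem_fixedSubmodule hx x.2) (h.equivariant n t x hx)
  zeros_compact := isCompact_setOf_orthogonalProjectionOnto_eq_zero
    (IsClosedEmbedding.id.prodMap
      (Submodule.closed_of_finiteDimensional _).isClosedEmbedding_subtypeVal) _
    (fun p hp => h.apply_mem_fixedSubmodule hp p.2.2) h.zeros_compact

theorem Otopy.IsGrad.restrictFixed {h : Otopy ρ Ω} (hgrad : h.IsGrad) :
    (h.restrictFixed hΩ).IsGrad := fun t => by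
  obtain ⟨φ, hinv, hgr⟩ := hgrad t
  exact ⟨fun y => φ y, fun n x hx => hinv n x hx, fun x hx => (hgr x hx).comp_subtypeVal _⟩

theorem Otopy.restrictFixed_slice {h : Otopy ρ Ω} {t : ℝ} {f : GradLocalMap ρ Ω}
    {k : GradLocalMap (restrictAction ρ H) (omegaHSub ρ Ω H)} (hk : RestrictsTo H f k)
    (hdom : {x | (t, x) ∈ h.dom} = f.dom) (hval : ∀ x ∈ f.dom, h.toFun (t, x) = f.toFun x) :
    {x | (t, x) ∈ (h.restrictFixed hΩ).dom} = k.dom ∧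
      ∀ x ∈ k.dom, (h.restrictFixed hΩ).toFun (t, x) = k.toFun x := by
  have hkdom : k.dom = (↑) ⁻¹' f.dom := hk.1.trans (preimage_inter_omegaH hΩ f.dom_sub)
  refine ⟨hkdom ▸ congrArg (Subtype.val ⁻¹' ·) hdom, fun x hx => ?_⟩
  have hxf : (x : V) ∈ f.dom := by rwa [hkdom] at hx
  have hxt : (t, (x : V)) ∈ h.dom := by rw [← hdom] at hxf; exact hxf
  ext
  rw [hk.2 x hx, ← hval x hxf]
  exact Submodule.coe_orthogonalProjectionOnto_of_mem _ (h.apply_mem_fixedSubmodule hxt x.2)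

theorem GradOtopic.of_restrictsTo {f g : GradLocalMap ρ Ω}
    {kf kg : GradLocalMap (restrictAction ρ H) (omegaHSub ρ Ω H)} (hfg : GradOtopic f g)
    (hf : RestrictsTo H f kf) (hg : RestrictsTo H g kg) : GradOtopic kf kg := by
  obtain ⟨h, hgrad, hdom₀, hdom₁, hval₀, hval₁⟩ := hfg
  obtain ⟨hdom₀', hval₀'⟩ := h.restrictFixed_slice hΩ hf hdom₀ hval₀
  obtain ⟨hdom₁', hval₁'⟩ := h.restrictFixed_slice hΩ hg hdom₁ hval₁
  exact ⟨h.restrictFixed hΩ, hgrad.restrictFixed hΩ, hdom₀', hdom₁', hval₀', hval₁'⟩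

end Restriction

theorem restriction_well_defined_general
    {n : ℕ} {G : Type*} [Group G] [TopologicalSpace G] [CompactSpace G]
    [ChartedSpace (EuclideanSpace ℝ (Fin n)) G] [LieGroup (𝓡 n) ((⊤ : ℕ∞) : WithTop ℕ∞) G]
    {V : Type*} [NormedAddCommGroup V] [InnerProductSpace ℝ V] [FiniteDimensional ℝ V]
    (ρ : G →* (V ≃ₗᵢ[ℝ] V))
    (Ω : Set V)
    (H : Subgroup G) (hcl : IsClosed ((H : Set G)))
    (hmax : IsMaximalOrbit ρ Ω H) :
    (∀ f : GradLocalMap ρ Ω,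
      ∃ k : GradLocalMap (restrictAction ρ H) (omegaHSub ρ Ω H), RestrictsTo H f k) ∧
    (∀ (f g : GradLocalMap ρ Ω)
      (kf kg : GradLocalMap (restrictAction ρ H) (omegaHSub ρ Ω H)),
      RestrictsTo H f kf → RestrictsTo H g kg → GradOtopic f g → GradOtopic kf kg) := by
  have : IsTopologicalGroup G := topologicalGroup_of_lieGroup (𝓡 n) ((⊤ : ℕ∞) : WithTop ℕ∞)
  have hΩ := fixedSubmodule_inter_subset_omegaH hcl hmax
  exact ⟨fun f => ⟨f.restrictFixed hΩ, f.restrictsTo_restrictFixed hΩ⟩,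
    fun _ _ _ _ hf hg hfg => hfg.of_restrictsTo hΩ hf hg⟩

/-- For a maximal orbit type `(H)`, the restriction `f_H = f|_(D_f ∩ Ω_H)` of any
`f ∈ F^∇_G(Ω)` is a `WH`-equivariant gradient local map on `Ω_H`, and gradient otopic
maps have gradient otopic restrictions; hence restriction induces a well-defined map
`F^∇_G[Ω] → F^∇_(WH)[Ω_H]`. -/
theorem restriction_well_defined
    {n : ℕ} {G : Type*} [Group G] [TopologicalSpace G] [CompactSpace G]
    [ChartedSpace (EuclideanSpace ℝ (Fin n)) G] [LieGroup (𝓡 n) ((⊤ : ℕ∞) : WithTop ℕ∞) G]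
    {V : Type*} [NormedAddCommGroup V] [InnerProductSpace ℝ V] [FiniteDimensional ℝ V]
    (ρ : G →* (V ≃ₗᵢ[ℝ] V)) (hρ : Continuous fun p : G × V => ρ p.1 p.2)
    (Ω : Set V) (hΩo : IsOpen Ω) (hΩinv : ∀ (g : G) (x : V), x ∈ Ω → ρ g x ∈ Ω)
    (H : Subgroup G) (hcl : IsClosed ((H : Set G)))
    (hiso : (omegaH ρ Ω H).Nonempty) (hmax : IsMaximalOrbit ρ Ω H) :
    (∀ f : GradLocalMap ρ Ω,
      ∃ k : GradLocalMap (restrictAction ρ H) (omegaHSub ρ Ω H), RestrictsTo H f k) ∧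
    (∀ (f g : GradLocalMap ρ Ω)
      (kf kg : GradLocalMap (restrictAction ρ H) (omegaHSub ρ Ω H)),
      RestrictsTo H f kf → RestrictsTo H g kg → GradOtopic f g → GradOtopic kf kg) :=
  restriction_well_defined_general (n := n) ρ Ω H hcl hmax

end
end

section
/- Let G be a compact Lie group, V a finite-dimensional real orthogonal representation of G, and Ω an open G-invariant subset of V. Then the relation of gradient otopy is an equivalence relation on the set F^∇_G(Ω) of equivariant gradient local maps on Ω. -/
open scoped Manifold Classical

set_option linter.unusedSectionVars false

noncomputable section

/-!
Gradient otopy is reflexive via the constant otopy and symmetric via the reversed otopy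
`t ↦ 1 - t`. For transitivity the two otopies are run one after the other at double speed.
The glued domain is relatively open in `[0,1] × Ω`, the glued map is continuous since the two
otopies agree on the common slice `t = 1/2`, and its zero set is the union of two affine
reparametrisations of the given compact zero sets. Every slice of these otopies is a slice
of one of the given otopies, so they remain gradient.
-/

lemma isCompact_timeReparam {W : Type*} [TopologicalSpace W] {Z : Set (ℝ × W)}
    (hZ : IsCompact Z) (e : ℝ ≃ₜ ℝ) : IsCompact {p : ℝ × W | (e p.1, p.2) ∈ Z} :=
  (e.prodCongr (Homeomorph.refl W)).isCompact_preimage.mpr hZ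

namespace Otopy

open Set

variable {Γ : Type*} [Group Γ] {W : Type*} [NormedAddCommGroup W] [InnerProductSpace ℝ W]
  {ρ : Γ →* (W ≃ₗᵢ[ℝ] W)} {Ω : Set W}

def Joins (h : Otopy ρ Ω) (f g : EqLocalMap ρ Ω) : Prop :=
  {x : W | (0, x) ∈ h.dom} = f.dom ∧ {x : W | (1, x) ∈ h.dom} = g.dom ∧
    (∀ x ∈ f.dom, h.toFun (0, x) = f.toFun x) ∧ (∀ x ∈ g.dom, h.toFun (1, x) = g.toFun x)

lemma dom_subset (h : Otopy ρ Ω) : h.dom ⊆ Icc 0 1 ×ˢ Ω := by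
  obtain ⟨U, -, hU⟩ := h.dom_relOpen
  exact hU ▸ inter_subset_right

def const (f : EqLocalMap ρ Ω) : Otopy ρ Ω where
  dom := Icc 0 1 ×ˢ f.dom
  toFun p := f.toFun p.2
  dom_relOpen := ⟨univ ×ˢ f.dom, isOpen_univ.prod f.dom_open, by
    ext p
    simp only [mem_prod, mem_inter_iff, mem_univ, true_and]
    exact ⟨fun hp => ⟨hp.2, hp.1, f.dom_sub hp.2⟩, fun hp => ⟨hp.2.1, hp.1⟩⟩⟩
  dom_inv g _ x hx := ⟨hx.1, f.dom_inv g x hx.2⟩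
  cont := f.cont.comp continuous_snd.continuousOn fun _ hp => hp.2
  equivariant g _ x hx := f.equivariant g x hx.2
  zeros_compact := by
    have hzeros : {p ∈ Icc (0 : ℝ) 1 ×ˢ f.dom | f.toFun p.2 = 0} =
        Icc 0 1 ×ˢ {x ∈ f.dom | f.toFun x = 0} := by
      ext p
      simp only [mem_setOf_eq, mem_prod]
      tauto
    exact hzeros ▸ isCompact_Icc.prod f.zeros_compact

lemma const_joins (f : EqLocalMap ρ Ω) : (const f).Joins f f := by
  refine ⟨?_, ?_, fun _ _ => rfl, fun _ _ => rfl⟩ <;>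
  · ext x
    simp [const]

lemma isGrad_const [CompleteSpace W] {f : EqLocalMap ρ Ω} (hf : IsGradMap f) :
    (const f).IsGrad := by
  obtain ⟨φ, hinv, hgrad⟩ := hf
  exact fun _ => ⟨φ, fun g x hx => hinv g x hx.2, fun x hx => hgrad x hx.2⟩

def reverse (h : Otopy ρ Ω) : Otopy ρ Ω where
  dom := {p | (1 - p.1, p.2) ∈ h.dom}
  toFun p := h.toFun (1 - p.1, p.2)
  dom_relOpen := by
    obtain ⟨U, hUo, hU⟩ := h.dom_relOpen
    refine ⟨{p | (1 - p.1, p.2) ∈ U}, hUo.preimage (by fun_prop), ?_⟩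
    ext ⟨t, x⟩
    simp only [hU, mem_setOf_eq, mem_inter_iff, mem_prod, mem_Icc]
    constructor <;> rintro ⟨hU, ⟨_, _⟩, hx⟩ <;> exact ⟨hU, ⟨by linarith, by linarith⟩, hx⟩
  dom_inv g t x hx := h.dom_inv g (1 - t) x hx
  cont := h.cont.comp (Continuous.continuousOn (by fun_prop)) fun _ hp => hp
  equivariant g t x hx := h.equivariant g (1 - t) x hx
  zeros_compact := isCompact_timeReparam h.zeros_compact (Homeomorph.subLeft 1)

lemma Joins.reverse {h : Otopy ρ Ω} {f g : EqLocalMap ρ Ω} (hfg : h.Joins f g) :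
    h.reverse.Joins g f := by
  obtain ⟨h₀, h₁, e₀, e₁⟩ := hfg
  refine ⟨?_, ?_, fun x hx => ?_, fun x hx => ?_⟩
  · simpa [Otopy.reverse] using h₁
  · simpa [Otopy.reverse] using h₀
  · simpa [Otopy.reverse] using e₁ x hx
  · simpa [Otopy.reverse] using e₀ x hx

lemma IsGrad.reverse [CompleteSpace W] {h : Otopy ρ Ω} (hh : h.IsGrad) : h.reverse.IsGrad :=
  fun t => hh (1 - t)

/-- At `t = 1/2` both conditions are imposed; written as implications they keep the domain
relatively open in `[0,1] × Ω` whatever `h₁` and `h₂` are. -/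
def concatDom (h₁ h₂ : Otopy ρ Ω) : Set (ℝ × W) :=
  {p | (p.1 ≤ 1 / 2 → (2 * p.1, p.2) ∈ h₁.dom) ∧ (1 / 2 ≤ p.1 → (2 * p.1 - 1, p.2) ∈ h₂.dom)}

def concatFun (h₁ h₂ : Otopy ρ Ω) (p : ℝ × W) : W :=
  if p.1 ≤ 1 / 2 then h₁.toFun (2 * p.1, p.2) else h₂.toFun (2 * p.1 - 1, p.2)

lemma concatDom_relOpen (h₁ h₂ : Otopy ρ Ω) :
    ∃ U : Set (ℝ × W), IsOpen U ∧ concatDom h₁ h₂ = U ∩ Icc (0 : ℝ) 1 ×ˢ Ω := by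
  obtain ⟨U₁, hU₁o, hU₁⟩ := h₁.dom_relOpen
  obtain ⟨U₂, hU₂o, hU₂⟩ := h₂.dom_relOpen
  refine ⟨({p | (2 * p.1, p.2) ∈ U₁} ∪ {p | 1 / 2 < p.1}) ∩
      ({p | (2 * p.1 - 1, p.2) ∈ U₂} ∪ {p | p.1 < 1 / 2}),
    ((hU₁o.preimage (by fun_prop)).union (isOpen_lt continuous_const continuous_fst)).inter
      ((hU₂o.preimage (by fun_prop)).union (isOpen_lt continuous_fst continuous_const)), ?_⟩
  ext ⟨t, x⟩
  simp only [concatDom, hU₁, hU₂, mem_setOf_eq, mem_inter_iff, mem_union, mem_prod, mem_Icc]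
  grind

lemma continuousOn_concatFun {h₁ h₂ : Otopy ρ Ω}
    (hval : ∀ x, (1, x) ∈ h₁.dom → h₁.toFun (1, x) = h₂.toFun (0, x)) :
    ContinuousOn (concatFun h₁ h₂) (concatDom h₁ h₂) := by
  refine ContinuousOn.if ?_ ?_ ?_
  · rintro ⟨t, x⟩ ⟨hD, hfr⟩
    obtain rfl : t = 1 / 2 := frontier_le_subset_eq continuous_fst continuous_const hfr
    have hx : ((1 : ℝ), x) ∈ h₁.dom := by simpa using hD.1 le_rfl
    simpa using hval x hx
  · rw [(isClosed_le continuous_fst continuous_const).closure_eq]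
    exact h₁.cont.comp (Continuous.continuousOn (by fun_prop)) fun p hp => hp.1.1 hp.2
  · have hcl : closure {p : ℝ × W | ¬p.1 ≤ 1 / 2} ⊆ {p | 1 / 2 ≤ p.1} := by
      simpa only [not_le] using closure_lt_subset_le continuous_const continuous_fst
    exact (h₂.cont.comp (Continuous.continuousOn (by fun_prop))
      fun p hp => hp.1.2 hp.2).mono (inter_subset_inter_right _ hcl)

lemma concatFun_zeros_eq {h₁ h₂ : Otopy ρ Ω}
    (hdom : {x | (1, x) ∈ h₁.dom} = {x | (0, x) ∈ h₂.dom})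
    (hval : ∀ x, (1, x) ∈ h₁.dom → h₁.toFun (1, x) = h₂.toFun (0, x)) :
    {p ∈ concatDom h₁ h₂ | concatFun h₁ h₂ p = 0} =
      {p | (2 * p.1, p.2) ∈ {q ∈ h₁.dom | h₁.toFun q = 0}} ∪
        {p | (2 * p.1 - 1, p.2) ∈ {q ∈ h₂.dom | h₂.toFun q = 0}} := by
  ext ⟨t, x⟩
  have hjoin : ((1 : ℝ), x) ∈ h₁.dom ↔ ((0 : ℝ), x) ∈ h₂.dom := Set.ext_iff.mp hdom x
  have ht₁ : (2 * t, x) ∈ h₁.dom → 0 ≤ 2 * t ∧ 2 * t ≤ 1 := fun hx => (h₁.dom_subset hx).1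
  have ht₂ : (2 * t - 1, x) ∈ h₂.dom → 0 ≤ 2 * t - 1 ∧ 2 * t - 1 ≤ 1 :=
    fun hx => (h₂.dom_subset hx).1
  simp only [concatDom, concatFun, mem_setOf_eq, mem_union]
  rcases eq_or_ne t (1 / 2) with rfl | ht
  · have hval_x := hval x
    norm_num at hval_x ⊢
    grind
  · grind

@[simps]
def concat (h₁ h₂ : Otopy ρ Ω) (hdom : {x | (1, x) ∈ h₁.dom} = {x | (0, x) ∈ h₂.dom})
    (hval : ∀ x, (1, x) ∈ h₁.dom → h₁.toFun (1, x) = h₂.toFun (0, x)) : Otopy ρ Ω where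
  dom := concatDom h₁ h₂
  toFun := concatFun h₁ h₂
  dom_relOpen := concatDom_relOpen h₁ h₂
  dom_inv g t x hx :=
    ⟨fun ht => h₁.dom_inv g _ x (hx.1 ht), fun ht => h₂.dom_inv g _ x (hx.2 ht)⟩
  cont := continuousOn_concatFun hval
  equivariant g t x hx := by
    unfold concatFun
    split_ifs with ht
    · exact h₁.equivariant g _ x (hx.1 ht)
    · exact h₂.equivariant g _ x (hx.2 (le_of_not_ge ht))
  zeros_compact := by
    rw [concatFun_zeros_eq hdom hval]
    exact (isCompact_timeReparam h₁.zeros_compact (Homeomorph.mulLeft₀ 2 two_ne_zero)).union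
      (isCompact_timeReparam h₂.zeros_compact
        ((Homeomorph.mulLeft₀ 2 two_ne_zero).trans (Homeomorph.subRight 1)))

lemma IsGrad.concat [CompleteSpace W] {h₁ h₂ : Otopy ρ Ω} (hg₁ : h₁.IsGrad) (hg₂ : h₂.IsGrad)
    (hdom : {x | (1, x) ∈ h₁.dom} = {x | (0, x) ∈ h₂.dom})
    (hval : ∀ x, (1, x) ∈ h₁.dom → h₁.toFun (1, x) = h₂.toFun (0, x)) :
    (h₁.concat h₂ hdom hval).IsGrad := by
  intro t
  by_cases ht : t ≤ 1 / 2
  · obtain ⟨φ, hinv, hgrad⟩ := hg₁ (2 * t)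
    refine ⟨φ, fun g x hx => hinv g x (hx.1 ht), fun x hx => ?_⟩
    simpa only [concat_toFun, concatFun, if_pos ht] using hgrad x (hx.1 ht)
  · obtain ⟨φ, hinv, hgrad⟩ := hg₂ (2 * t - 1)
    have ht' := le_of_not_ge ht
    refine ⟨φ, fun g x hx => hinv g x (hx.2 ht'), fun x hx => ?_⟩
    simpa only [concat_toFun, concatFun, if_neg ht] using hgrad x (hx.2 ht')

variable {h₁ h₂ : Otopy ρ Ω} {f g k : EqLocalMap ρ Ω}

lemma Joins.dom_one_eq (hfg : h₁.Joins f g) (hgk : h₂.Joins g k) :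
    {x | (1, x) ∈ h₁.dom} = {x | (0, x) ∈ h₂.dom} :=
  hfg.2.1.trans hgk.1.symm

lemma Joins.apply_one_eq (hfg : h₁.Joins f g) (hgk : h₂.Joins g k) (x : W)
    (hx : (1, x) ∈ h₁.dom) : h₁.toFun (1, x) = h₂.toFun (0, x) := by
  have hxg : x ∈ g.dom := hfg.2.1 ▸ hx
  rw [hfg.2.2.2 x hxg, hgk.2.2.1 x hxg]

lemma Joins.concat (hfg : h₁.Joins f g) (hgk : h₂.Joins g k) :
    (h₁.concat h₂ (hfg.dom_one_eq hgk) (hfg.apply_one_eq hgk)).Joins f k := by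
  obtain ⟨a₀, -, v₀, -⟩ := hfg
  obtain ⟨-, b₁, -, w₁⟩ := hgk
  refine ⟨?_, ?_, fun x hx => ?_, fun x hx => ?_⟩
  · simpa [concatDom] using a₀
  · norm_num [concatDom]
    exact b₁
  · simpa [concatFun] using v₀ x hx
  · norm_num [concatFun]
    exact w₁ x hx

end Otopy

section GradOtopic

variable {Γ : Type*} [Group Γ] {W : Type*} [NormedAddCommGroup W] [InnerProductSpace ℝ W]
  [CompleteSpace W] {ρ : Γ →* (W ≃ₗᵢ[ℝ] W)} {Ω : Set W} {f g k : GradLocalMap ρ Ω}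

lemma gradOtopic_iff :
    GradOtopic f g ↔ ∃ h : Otopy ρ Ω, h.IsGrad ∧ h.Joins f.toEqLocalMap g.toEqLocalMap :=
  Iff.rfl

lemma gradOtopic_refl (f : GradLocalMap ρ Ω) : GradOtopic f f :=
  gradOtopic_iff.mpr ⟨_, Otopy.isGrad_const f.isGrad, Otopy.const_joins _⟩

lemma GradOtopic.symm (hfg : GradOtopic f g) : GradOtopic g f := by
  obtain ⟨h, hgrad, hjoins⟩ := gradOtopic_iff.mp hfg
  exact gradOtopic_iff.mpr ⟨_, hgrad.reverse, hjoins.reverse⟩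

lemma GradOtopic.trans (hfg : GradOtopic f g) (hgk : GradOtopic g k) : GradOtopic f k := by
  obtain ⟨h₁, hgrad₁, hjoins₁⟩ := gradOtopic_iff.mp hfg
  obtain ⟨h₂, hgrad₂, hjoins₂⟩ := gradOtopic_iff.mp hgk
  exact gradOtopic_iff.mpr ⟨_, hgrad₁.concat hgrad₂ _ _, hjoins₁.concat hjoins₂⟩

end GradOtopic

theorem gradOtopic_equivalence_general
    {G : Type*} [Group G]
    {V : Type*} [NormedAddCommGroup V] [InnerProductSpace ℝ V] [FiniteDimensional ℝ V]
    (ρ : G →* (V ≃ₗᵢ[ℝ] V))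
    (Ω : Set V) :
    Equivalence (GradOtopic (ρ := ρ) (Ω := Ω)) :=
  ⟨gradOtopic_refl, GradOtopic.symm, GradOtopic.trans⟩

/-- Gradient otopy is an equivalence relation on `F^∇_G(Ω)`. -/
theorem gradOtopic_equivalence
    {n : ℕ} {G : Type*} [Group G] [TopologicalSpace G] [CompactSpace G]
    [ChartedSpace (EuclideanSpace ℝ (Fin n)) G] [LieGroup (𝓡 n) (⊤ : ℕ∞) G]
    {V : Type*} [NormedAddCommGroup V] [InnerProductSpace ℝ V] [FiniteDimensional ℝ V]
    (ρ : G →* (V ≃ₗᵢ[ℝ] V)) (hρ : Continuous fun p : G × V => ρ p.1 p.2)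
    (Ω : Set V) (hΩo : IsOpen Ω) (hΩinv : ∀ (g : G) (x : V), x ∈ Ω → ρ g x ∈ Ω) :
    Equivalence (GradOtopic (ρ := ρ) (Ω := Ω)) :=
  gradOtopic_equivalence_general ρ Ω

end
end

section
/- Let G be a compact Lie group, V a finite-dimensional real orthogonal representation of G, and Ω an open G-invariant subset of V with 0 ∈ Ω and V^G = {0}. If f, g ∈ F_G(Ω) are otopic equivariant local maps, then 0 ∈ D_f if and only if 0 ∈ D_g; in particular, membership of 0 in the domain is a (gradient) otopy invariant on F^∇_G(Ω). -/
open scoped Manifold Classical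

set_option linter.unusedSectionVars false

noncomputable section

/-!
For an otopy `h`, the times `t` with `(t, 0) ∈ D_h` form a subset of `[0,1]` which is open,
because `D_h` is relatively open, and closed, because `V^G = 0` forces `h(t, 0) = 0`, so that
the subset is a slice of the compact zero set of `h`. By connectedness of `[0,1]` it contains
either both endpoints or neither.
-/

namespace Otopy

open unitInterval

variable {Γ : Type*} [Group Γ] {W : Type*} [NormedAddCommGroup W] [InnerProductSpace ℝ W]
  [CompleteSpace W] {ρ : Γ →* (W ≃ₗᵢ[ℝ] W)} {Ω : Set W} (h : Otopy ρ Ω)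

theorem isOpen_slice {x : W} (hx : x ∈ Ω) : IsOpen {t : I | ((t : ℝ), x) ∈ h.dom} := by
  obtain ⟨U, hU, hdom⟩ := h.dom_relOpen
  have hslice : {t : I | ((t : ℝ), x) ∈ h.dom} = (fun t : I => ((t : ℝ), x)) ⁻¹' U := by
    ext t
    rw [hdom]
    exact ⟨And.left, fun htU => ⟨htU, t.2, hx⟩⟩
  rw [hslice]
  exact hU.preimage (by fun_prop)

theorem isClosed_slice {x : W} (hzero : ∀ t : ℝ, (t, x) ∈ h.dom → h.toFun (t, x) = 0) :
    IsClosed {t : I | ((t : ℝ), x) ∈ h.dom} := by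
  have hslice : {t : I | ((t : ℝ), x) ∈ h.dom} =
      (fun t : I => ((t : ℝ), x)) ⁻¹' {p ∈ h.dom | h.toFun p = 0} := by
    ext t
    exact ⟨fun ht => ⟨ht, hzero t ht⟩, And.left⟩
  rw [hslice]
  exact h.zeros_compact.isClosed.preimage (by fun_prop)

theorem zero_mem_dom_iff_one_mem_dom {x : W} (hx : x ∈ Ω)
    (hzero : ∀ t : ℝ, (t, x) ∈ h.dom → h.toFun (t, x) = 0) :
    ((0 : ℝ), x) ∈ h.dom ↔ ((1 : ℝ), x) ∈ h.dom := by
  have hclopen : IsClopen {t : I | ((t : ℝ), x) ∈ h.dom} :=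
    ⟨h.isClosed_slice hzero, h.isOpen_slice hx⟩
  exact ⟨fun h0 => Set.eq_univ_iff_forall.mp (hclopen.eq_univ ⟨0, h0⟩) 1,
    fun h1 => Set.eq_univ_iff_forall.mp (hclopen.eq_univ ⟨1, h1⟩) 0⟩

theorem toFun_zero_eq_zero (hfix : ∀ v : W, (∀ g : Γ, ρ g v = v) → v = 0) {t : ℝ}
    (ht : (t, (0 : W)) ∈ h.dom) : h.toFun (t, 0) = 0 :=
  hfix _ fun g => by simpa using (h.equivariant g t 0 ht).symm

end Otopy

theorem zero_membership_otopy_invariant_general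
    {G : Type*} [Group G]
    {V : Type*} [NormedAddCommGroup V] [InnerProductSpace ℝ V] [FiniteDimensional ℝ V]
    (ρ : G →* (V ≃ₗᵢ[ℝ] V))
    (Ω : Set V)
    (h0 : (0 : V) ∈ Ω) (hfix : ∀ v : V, (∀ g : G, ρ g v = v) → v = 0) :
    (∀ f g : EqLocalMap ρ Ω, Otopic f g → ((0 : V) ∈ f.dom ↔ (0 : V) ∈ g.dom)) ∧
    (∀ f g : GradLocalMap ρ Ω, GradOtopic f g → ((0 : V) ∈ f.dom ↔ (0 : V) ∈ g.dom)) := by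
  have endpoints (h : Otopy ρ Ω) : ((0 : ℝ), (0 : V)) ∈ h.dom ↔ ((1 : ℝ), (0 : V)) ∈ h.dom :=
    h.zero_mem_dom_iff_one_mem_dom h0 fun _ => h.toFun_zero_eq_zero hfix
  refine ⟨?_, ?_⟩
  · rintro f g ⟨h, hf, hg, -, -⟩
    rw [← hf, ← hg]
    exact endpoints h
  · rintro f g ⟨h, -, hf, hg, -, -⟩
    rw [← hf, ← hg]
    exact endpoints h

/-- If `0 ∈ Ω` and `V^G = 0`, then for otopic equivariant local maps `f, g` one has
`0 ∈ D_f ↔ 0 ∈ D_g`; in particular membership of `0` in the domain is a (gradient)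
otopy invariant on `F^∇_G(Ω)`. -/
theorem zero_membership_otopy_invariant
    {n : ℕ} {G : Type*} [Group G] [TopologicalSpace G] [CompactSpace G]
    [ChartedSpace (EuclideanSpace ℝ (Fin n)) G] [LieGroup (𝓡 n) (⊤ : ℕ∞) G]
    {V : Type*} [NormedAddCommGroup V] [InnerProductSpace ℝ V] [FiniteDimensional ℝ V]
    (ρ : G →* (V ≃ₗᵢ[ℝ] V)) (hρ : Continuous fun p : G × V => ρ p.1 p.2)
    (Ω : Set V) (hΩo : IsOpen Ω) (hΩinv : ∀ (g : G) (x : V), x ∈ Ω → ρ g x ∈ Ω)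
    (h0 : (0 : V) ∈ Ω) (hfix : ∀ v : V, (∀ g : G, ρ g v = v) → v = 0) :
    (∀ f g : EqLocalMap ρ Ω, Otopic f g → ((0 : V) ∈ f.dom ↔ (0 : V) ∈ g.dom)) ∧
    (∀ f g : GradLocalMap ρ Ω, GradOtopic f g → ((0 : V) ∈ f.dom ↔ (0 : V) ∈ g.dom)) :=
  zero_membership_otopy_invariant_general ρ Ω h0 hfix

end
end
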